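/- CC/TT-equivalence is not substitutive with respect to negation: there are a set Γ of formulae and formulae A, B such that Γ ⊨_CC/TT A ↔ B but not Γ ⊨_CC/TT ¬A ↔ ¬B. In particular, taking Γ = ∅, A = ⊤ and B = ⊥ → ⊤ (where ⊤ := p∨¬p and ⊥ := p∧¬p for a fixed variable p): ⊨_CC/TT ⊤ ↔ (⊥→⊤) holds, but ⊨_CC/TT ¬⊤ ↔ ¬(⊥→⊤) fails. -/
import Mathlib

inductive Formula : Type
  | var : Nat → Formula
  | neg : Formula → Formula
  | conj : Formula → Formula → Formula
  | disj : Formula → Formula → Formula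
  | impl : Formula → Formula → Formula
deriving DecidableEq

inductive TV : Type
  | zero
  | half
  | one
deriving DecidableEq

/-- Strong Kleene negation: 0↦1, ½↦½, 1↦0. -/
def tneg : TV → TV
  | .zero => .one
  | .half => .half
  | .one => .zero

/-- min on {0,½,1}. -/
def tmin : TV → TV → TV
  | .zero, _ => .zero
  | .half, .zero => .zero
  | .half, .half => .half
  | .half, .one => .half
  | .one, b => b

/-- max on {0,½,1}. -/
def tmax : TV → TV → TV
  | .one, _ => .one
  | .half, .zero => .half
  | .half, .half => .half
  | .half, .one => .one
  | .zero, b => b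

/-- Designated values: ½ and 1. -/
def designated (x : TV) : Prop := x = TV.half ∨ x = TV.one

/-- The Cooper–Cantwell conditional table: f_CC(x,y) = y if x ∈ {½,1}, and ½ if x = 0. -/
def fCC : TV → TV → TV
  | .zero, _ => .half
  | .half, b => b
  | .one, b => b

/-- A CC-evaluation. -/
def IsCCEval (v : Formula → TV) : Prop :=
  (∀ A, v (.neg A) = tneg (v A)) ∧
  (∀ A B, v (.conj A B) = tmin (v A) (v B)) ∧
  (∀ A B, v (.disj A B) = tmax (v A) (v B)) ∧
  (∀ A B, v (.impl A B) = fCC (v A) (v B))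

/-- TT-validity: Γ ⊨_CC/TT A. -/
def CCConsequence (Γ : Set Formula) (A : Formula) : Prop :=
  ∀ v : Formula → TV, IsCCEval v → (∀ B ∈ Γ, designated (v B)) → designated (v A)

/-- The biconditional A ↔ B := (A→B) ∧ (B→A). -/
def fiff (A B : Formula) : Formula := .conj (.impl A B) (.impl B A)

/-- ⊤ := p ∨ ¬p for the fixed variable p = var 0. -/
def fTop : Formula := .disj (.var 0) (.neg (.var 0))

/-- ⊥ := p ∧ ¬p for the fixed variable p = var 0. -/
def fBot : Formula := .conj (.var 0) (.neg (.var 0))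

/-- Recursive evaluation from a variable assignment. -/
def evalF (σ : Nat → TV) : Formula → TV
  | .var n => σ n
  | .neg A => tneg (evalF σ A)
  | .conj A B => tmin (evalF σ A) (evalF σ B)
  | .disj A B => tmax (evalF σ A) (evalF σ B)
  | .impl A B => fCC (evalF σ A) (evalF σ B)

lemma evalF_isCCEval (σ : Nat → TV) : IsCCEval (evalF σ) :=
  ⟨fun _ => rfl, fun _ _ => rfl, fun _ _ => rfl, fun _ _ => rfl⟩

lemma pos : CCConsequence (∅ : Set Formula) (fiff fTop (.impl fBot fTop)) := by
  rintro v ⟨hn, hc, hd, hi⟩ -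
  have hTop : v fTop = tmax (v (.var 0)) (tneg (v (.var 0))) := by
    rw [fTop, hd, hn]
  have hBot : v fBot = tmin (v (.var 0)) (tneg (v (.var 0))) := by
    rw [fBot, hc, hn]
  simp only [fiff, hc, hi, hTop, hBot]
  rcases v (.var 0) with _ | _ | _ <;> simp [tneg, tmin, tmax, fCC, designated]

lemma neg : ¬ CCConsequence (∅ : Set Formula) (fiff (.neg fTop) (.neg (.impl fBot fTop))) := by
  intro h
  have := h (evalF (fun _ => TV.one)) (evalF_isCCEval _) (by simp)
  simp [fiff, evalF, fTop, fBot, tneg, tmin, tmax, fCC, designated] at this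

/-- CC/TT-equivalence is not substitutive with respect to negation: there are Γ, A, B
with Γ ⊨_CC/TT A ↔ B but not Γ ⊨_CC/TT ¬A ↔ ¬B; in particular, with Γ = ∅, A = ⊤ and
B = ⊥ → ⊤: ⊨_CC/TT ⊤ ↔ (⊥→⊤) holds but ⊨_CC/TT ¬⊤ ↔ ¬(⊥→⊤) fails. -/
theorem cc_not_substitutive :
    (∃ (Γ : Set Formula) (A B : Formula),
      CCConsequence Γ (fiff A B) ∧ ¬ CCConsequence Γ (fiff (.neg A) (.neg B))) ∧
    CCConsequence (∅ : Set Formula) (fiff fTop (.impl fBot fTop)) ∧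
    ¬ CCConsequence (∅ : Set Formula) (fiff (.neg fTop) (.neg (.impl fBot fTop))) := by
  exact ⟨⟨∅, fTop, .impl fBot fTop, pos, neg⟩, pos, neg⟩
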